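/- Let f, g : X → ℝ ∪ {+∞} be proper convex functions and assume that one of them is finite and continuous at some point of the effective domain of the other. Then inf_{z ∈ X**} ( f**(z) + g**(z) ) = inf_{x ∈ X} ( f(x) + g(x) ); consequently, there is a zero duality gap between (P): inf_{x∈X}(f+g)(x) and its Fenchel dual (D): sup_{x* ∈ X*} ( −f*(x*) − g*(−x*) ), i.e. v(D) = v(P). -/

import Mathlib

open Filter Topology Set NormedSpace
open scoped Classical

noncomputable section

/-- Effective domain of an extended-real-valued function. -/
def edom {Z : Type*} (g : Z → EReal) : Set Z := {z | g z ≠ ⊤}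

/-- Indicator function of a set, with values in `EReal`. -/
def eindicator {Z : Type*} (A : Set Z) : Z → EReal := fun z => if z ∈ A then 0 else ⊤

/-- Scalar multiplication of an `EReal` value by a nonnegative real, with the
convention `0 · (+∞) = +∞`. -/
def smulInf (a : ℝ) (v : EReal) : EReal := if v = ⊤ then ⊤ else (a : EReal) * v

variable {X : Type*} [NormedAddCommGroup X] [NormedSpace ℝ X]

/-- Convexity for `EReal`-valued functions. -/
def ConvexER (g : X → EReal) : Prop :=
  ∀ x y : X, ∀ a b : ℝ, 0 ≤ a → 0 ≤ b → a + b = 1 →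
    g (a • x + b • y) ≤ (a : EReal) * g x + (b : EReal) * g y

/-- Properness: not identically `+∞`, and nowhere `-∞` (so the function maps into `ℝ ∪ {+∞}`). -/
def ProperER (g : X → EReal) : Prop := (∃ x, g x ≠ ⊤) ∧ ∀ x, g x ≠ ⊥

/-- Fenchel conjugate of `g : X → EReal`, defined on the topological dual. -/
def fconj (g : X → EReal) : StrongDual ℝ X → EReal :=
  fun p => ⨆ x : X, (p x : EReal) - g x

/-- Fenchel biconjugate of `g : X → EReal`, defined on the bidual. -/
def fbiconj (g : X → EReal) : StrongDual ℝ (StrongDual ℝ X) → EReal :=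
  fun z => ⨆ p : StrongDual ℝ X, (z p : EReal) - fconj g p

/-- Closure with respect to the weak-* topology `σ(E*, E)` on a dual space. -/
def wstarClosure {E : Type*} [NormedAddCommGroup E] [NormedSpace ℝ E]
    (A : Set (StrongDual ℝ E)) : Set (StrongDual ℝ E) :=
  StrongDual.toWeakDual ⁻¹' closure (StrongDual.toWeakDual '' A)


/-!
Weak duality gives `sup (D) ≤ inf_{X**} (f** + g**) ≤ inf_X (f + g)` for arbitrary `f, g`,
the second inequality because `f** ∘ ι ≤ f` on `X`. For the reverse inequality take a real
`m ≤ inf (f + g)`. The strict epigraph of `f` is convex, has nonempty interior since `f` is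
bounded above near the point of continuity, and is disjoint from the hypograph of `m - g`.
A separating hyperplane cannot be vertical, because both sets meet the vertical line through
that point, so it is the graph of a continuous affine `ℓ = ⟨q, ·⟩ + c` with `m - g ≤ ℓ ≤ f`.
Then `f*(q) ≤ -c` and `g*(-q) ≤ c - m`, so the dual objective at `q` is at least `m`.
-/

theorem Convex.exists_separating_of_nonempty_interior {E : Type*} [TopologicalSpace E]
    [AddCommGroup E] [Module ℝ E] [IsTopologicalAddGroup E] [ContinuousSMul ℝ E] {s t : Set E}
    (hs : Convex ℝ s) (ht : Convex ℝ t) (hst : Disjoint (interior s) t)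
    (hsint : (interior s).Nonempty) :
    ∃ (φ : StrongDual ℝ E) (u : ℝ),
      (∀ a ∈ s, φ a ≤ u) ∧ (∀ a ∈ interior s, φ a < u) ∧ ∀ b ∈ t, u ≤ φ b := by
  obtain ⟨φ, u, hint, ht⟩ := geometric_hahn_banach_open hs.interior isOpen_interior ht hst
  refine ⟨φ, u, fun a ha => ?_, hint, ht⟩
  refine closure_minimal (fun y hy => (hint y hy).le)
    (isClosed_le φ.continuous continuous_const) ?_
  rw [hs.closure_interior_eq_closure_of_nonempty_interior hsint]
  exact subset_closure ha

theorem ConvexER.apply_combo_le {f : X → EReal} (hf : ConvexER f) {x y : X} {r s : ℝ}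
    (hx : f x ≤ r) (hy : f y ≤ s) {a b : ℝ} (ha : 0 ≤ a) (hb : 0 ≤ b) (hab : a + b = 1) :
    f (a • x + b • y) ≤ ((a * r + b * s : ℝ) : EReal) :=
  calc f (a • x + b • y) ≤ (a : EReal) * f x + (b : EReal) * f y := hf x y a b ha hb hab
    _ ≤ (a : EReal) * r + (b : EReal) * s :=
      add_le_add (mul_le_mul_of_nonneg_left hx (EReal.coe_nonneg.2 ha))
        (mul_le_mul_of_nonneg_left hy (EReal.coe_nonneg.2 hb))
    _ = ((a * r + b * s : ℝ) : EReal) := by norm_cast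

def strictEpigraph {α : Type*} (f : α → EReal) : Set (α × ℝ) := {q | f q.1 < q.2}

def hypographSub {α : Type*} (m : ℝ) (g : α → EReal) : Set (α × ℝ) :=
  {q | g q.1 ≤ ((m - q.2 : ℝ) : EReal)}

theorem ConvexER.convex_strictEpigraph {f : X → EReal} (hf : ConvexER f) :
    Convex ℝ (strictEpigraph f) := by
  rintro ⟨x, t⟩ hx ⟨y, s⟩ hy a b ha hb hab
  obtain ⟨t', hxt', ht'⟩ := EReal.lt_iff_exists_real_btwn.1 hx
  obtain ⟨s', hys', hs'⟩ := EReal.lt_iff_exists_real_btwn.1 hy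
  have ht't : t' < t := EReal.coe_lt_coe_iff.1 ht'
  have hs's : s' < s := EReal.coe_lt_coe_iff.1 hs'
  refine (hf.apply_combo_le hxt'.le hys'.le ha hb hab).trans_lt (EReal.coe_lt_coe_iff.2 ?_)
  change a * t' + b * s' < a * t + b * s
  rcases ha.eq_or_lt with rfl | ha
  · rw [zero_add] at hab
    subst hab
    linarith
  · nlinarith

theorem ConvexER.convex_hypographSub {g : X → EReal} (hg : ConvexER g) (m : ℝ) :
    Convex ℝ (hypographSub m g) := by
  rintro ⟨x, t⟩ hx ⟨y, s⟩ hy a b ha hb hab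
  refine (hg.apply_combo_le hx hy ha hb hab).trans (EReal.coe_le_coe_iff.2 ?_)
  change a * (m - t) + b * (m - s) ≤ m - (a * t + b * s)
  have hm : m = a * m + b * m := by rw [← add_mul, hab, one_mul]
  linarith

theorem disjoint_strictEpigraph_hypographSub {α : Type*} {f g : α → EReal} {m : ℝ}
    (hm : ∀ x, (m : EReal) ≤ f x + g x) : Disjoint (strictEpigraph f) (hypographSub m g) := by
  refine Set.disjoint_left.2 fun ⟨x, t⟩ hfx hgx => ?_
  obtain ⟨t', hft', ht't⟩ := EReal.lt_iff_exists_real_btwn.1 (show f x < t from hfx)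
  have hlt : t' + (m - t) < m := by linarith [EReal.coe_lt_coe_iff.1 ht't]
  have hle : f x + g x ≤ ((t' + (m - t) : ℝ) : EReal) := by
    rw [EReal.coe_add]
    exact add_le_add hft'.le hgx
  exact (hm x).not_gt (hle.trans_lt (EReal.coe_lt_coe_iff.2 hlt))

theorem mem_interior_strictEpigraph {α : Type*} [TopologicalSpace α] {f : α → EReal} {x₀ : α}
    (hf : ContinuousAt f x₀) {t : ℝ} (ht : f x₀ < t) : (x₀, t) ∈ interior (strictEpigraph f) := by
  obtain ⟨c, hfc, hct⟩ := EReal.lt_iff_exists_real_btwn.1 ht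
  rw [mem_interior_iff_mem_nhds]
  refine mem_of_superset (prod_mem_nhds (hf (Iio_mem_nhds hfc)) (Ioi_mem_nhds
    (EReal.coe_lt_coe_iff.1 hct))) ?_
  rintro ⟨x, s⟩ ⟨hx, hs⟩
  exact (show f x < c from hx).trans (EReal.coe_lt_coe_iff.2 hs)

theorem ConvexER.exists_affine_sandwich {f g : X → EReal} (hfc : ConvexER f) (hgc : ConvexER g)
    {m : ℝ} (hm : ∀ x, (m : EReal) ≤ f x + g x) {x₀ : X} (hfx₀ : f x₀ ≠ ⊤) (hgx₀ : g x₀ ≠ ⊤)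
    (hf : ContinuousAt f x₀) :
    ∃ (q : StrongDual ℝ X) (c : ℝ),
      (∀ x, ((q x + c : ℝ) : EReal) ≤ f x) ∧ ∀ x, ((m - (q x + c) : ℝ) : EReal) ≤ g x := by
  obtain ⟨r₀, hr₀, -⟩ := EReal.lt_iff_exists_real_btwn.1 (lt_top_iff_ne_top.2 hfx₀)
  obtain ⟨s₀, hs₀, -⟩ := EReal.lt_iff_exists_real_btwn.1 (lt_top_iff_ne_top.2 hgx₀)
  obtain ⟨φ, u, hA, hintA, hB⟩ :=
    hfc.convex_strictEpigraph.exists_separating_of_nonempty_interior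
      (hgc.convex_hypographSub m)
      ((disjoint_strictEpigraph_hypographSub hm).mono_left interior_subset)
      ⟨_, mem_interior_strictEpigraph hf hr₀⟩
  set p : StrongDual ℝ X := φ.comp (ContinuousLinearMap.inl ℝ X ℝ)
  set β : ℝ := φ (0, 1)
  have hφ : ∀ x t, φ (x, t) = p x + β * t := fun x t => by
    have hxt : ((x, t) : X × ℝ) = (x, 0) + t • (0, 1) := by simp
    rw [hxt, map_add, map_smul, smul_eq_mul, mul_comm]
    rfl
  clear_value p β
  -- Not vertical: the hyperplane separates `(x₀, m - s₀)` from `(x₀, t)` for all large `t`.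
  have hβ : β < 0 := by
    obtain ⟨t, hr₀t, hs₀t⟩ : ∃ t, r₀ < t ∧ m - s₀ < t :=
      ⟨max r₀ (m - s₀) + 1, by linarith [le_max_left r₀ (m - s₀)],
        by linarith [le_max_right r₀ (m - s₀)]⟩
    have hlt := hintA (x₀, t) (mem_interior_strictEpigraph hf (hr₀.trans (by exact_mod_cast hr₀t)))
    have hge := hB (x₀, m - s₀)
      (show g x₀ ≤ ((m - (m - s₀) : ℝ) : EReal) by rw [sub_sub_cancel]; exact hs₀.le)
    rw [hφ] at hlt hge
    nlinarith
  obtain ⟨b, hb, rfl⟩ : ∃ b, 0 < b ∧ β = -b := ⟨-β, by linarith, by ring⟩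
  -- `ℓ` is the hyperplane `p x - b t = u` solved for `t`.
  have hℓ : ∀ x, (b⁻¹ • p) x + -(u / b) = (p x - u) / b := fun x => by
    rw [smul_apply, smul_eq_mul]
    ring
  refine ⟨b⁻¹ • p, -(u / b), fun x => ?_, fun x => ?_⟩
  all_goals
    rw [hℓ]
    refine EReal.le_of_forall_lt_iff_le.1 fun z hz => EReal.coe_le_coe_iff.2 ?_
  · have hφz := hA (x, z) hz
    rw [hφ] at hφz
    rw [div_le_iff₀ hb]
    linarith
  · have hφz := hB (x, m - z)
      (show g x ≤ ((m - (m - z) : ℝ) : EReal) by rw [sub_sub_cancel]; exact hz.le)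
    rw [hφ] at hφz
    rw [sub_le_comm, le_div_iff₀ hb]
    linarith

theorem coe_sub_le_fconj {f : X → EReal} {x : X} {r : ℝ} (h : f x ≤ r) (p : StrongDual ℝ X) :
    ((p x - r : ℝ) : EReal) ≤ fconj f p :=
  calc ((p x - r : ℝ) : EReal) = (p x : EReal) - r := EReal.coe_sub _ _
    _ ≤ (p x : EReal) - f x := EReal.sub_le_sub le_rfl h
    _ ≤ fconj f p := le_iSup (fun x => (p x : EReal) - f x) x

theorem fconj_le_of_forall_coe_le {f : X → EReal} {p : StrongDual ℝ X} {c : ℝ}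
    (h : ∀ x, ((p x + c : ℝ) : EReal) ≤ f x) : fconj f p ≤ ((-c : ℝ) : EReal) :=
  iSup_le fun x =>
    calc (p x : EReal) - f x ≤ (p x : EReal) - ((p x + c : ℝ) : EReal) :=
          EReal.sub_le_sub le_rfl (h x)
      _ = ((-c : ℝ) : EReal) := by rw [← EReal.coe_sub, sub_add_cancel_left]

theorem fbiconj_inclusionInDoubleDual_le (f : X → EReal) (x : X) :
    fbiconj f (inclusionInDoubleDual ℝ X x) ≤ f x :=
  EReal.le_of_forall_lt_iff_le.1 fun r hr => iSup_le fun p =>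
    calc (p x : EReal) - fconj f p ≤ (p x : EReal) - ((p x - r : ℝ) : EReal) :=
          EReal.sub_le_sub le_rfl (coe_sub_le_fconj hr.le p)
      _ = r := by rw [← EReal.coe_sub, sub_sub_cancel]

theorem neg_fconj_sub_fconj_neg_le_fbiconj_add (f g : X → EReal)
    (z : StrongDual ℝ (StrongDual ℝ X)) (p : StrongDual ℝ X) :
    -fconj f p - fconj g (-p) ≤ fbiconj f z + fbiconj g z :=
  calc -fconj f p - fconj g (-p)
        = ((z p : EReal) - fconj f p) + ((z (-p) : EReal) - fconj g (-p)) := by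
          rw [map_neg, EReal.coe_neg, sub_eq_add_neg, sub_eq_add_neg, sub_eq_add_neg,
            add_add_add_comm, ← EReal.coe_neg, ← EReal.coe_add, add_neg_cancel, EReal.coe_zero,
            zero_add]
    _ ≤ fbiconj f z + fbiconj g z :=
        add_le_add (le_iSup (fun p => (z p : EReal) - fconj f p) p)
          (le_iSup (fun p => (z p : EReal) - fconj g p) (-p))

theorem iInf_add_le_iSup_neg_fconj_sub_fconj_neg {f g : X → EReal} (hfc : ConvexER f)
    (hgc : ConvexER g) {x₀ : X} (hfx₀ : f x₀ ≠ ⊤) (hgx₀ : g x₀ ≠ ⊤) (hf : ContinuousAt f x₀) :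
    (⨅ x, f x + g x) ≤ ⨆ p : StrongDual ℝ X, -fconj f p - fconj g (-p) := by
  refine EReal.ge_of_forall_gt_iff_ge.1 fun m hm => ?_
  obtain ⟨q, c, hfq, hgq⟩ :=
    hfc.exists_affine_sandwich hgc (fun x => hm.le.trans (iInf_le _ x)) hfx₀ hgx₀ hf
  have hf' : fconj f q ≤ ((-c : ℝ) : EReal) := fconj_le_of_forall_coe_le hfq
  have hg' : fconj g (-q) ≤ ((-(m - c) : ℝ) : EReal) := fconj_le_of_forall_coe_le fun x =>
    (hgq x).trans_eq' (by rw [neg_apply]; congr 1; ring)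
  calc (m : EReal) = -((-c : ℝ) : EReal) - ((-(m - c) : ℝ) : EReal) := by
        rw [← EReal.coe_neg, ← EReal.coe_sub]; congr 1; ring
    _ ≤ -fconj f q - fconj g (-q) := EReal.sub_le_sub (EReal.neg_le_neg_iff.2 hf') hg'
    _ ≤ ⨆ p : StrongDual ℝ X, -fconj f p - fconj g (-p) :=
        le_iSup (fun p => -fconj f p - fconj g (-p)) q

theorem iSup_neg_fconj_sub_fconj_neg_comm (f g : X → EReal) :
    (⨆ p : StrongDual ℝ X, -fconj f p - fconj g (-p)) =
      ⨆ p : StrongDual ℝ X, -fconj g p - fconj f (-p) := by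
  rw [← (Equiv.neg (StrongDual ℝ X)).iSup_comp]
  exact iSup_congr fun p => by
    rw [Equiv.neg_apply, neg_neg, sub_eq_add_neg, sub_eq_add_neg, add_comm]

theorem fenchel_duality_biconjugate_general
    {X : Type*} [NormedAddCommGroup X] [NormedSpace ℝ X]
    (f g : X → EReal)
    (hfc : ConvexER f) (hgc : ConvexER g)
    (hcont : (∃ x, g x ≠ ⊤ ∧ f x ≠ ⊤ ∧ ContinuousAt f x) ∨
             (∃ x, f x ≠ ⊤ ∧ g x ≠ ⊤ ∧ ContinuousAt g x)) :
    (⨅ z : StrongDual ℝ (StrongDual ℝ X), fbiconj f z + fbiconj g z) = (⨅ x : X, f x + g x) ∧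
      (⨆ p : StrongDual ℝ X, -fconj f p - fconj g (-p)) = ⨅ x : X, f x + g x := by
  have hPD : (⨅ x, f x + g x) ≤ ⨆ p : StrongDual ℝ X, -fconj f p - fconj g (-p) := by
    rcases hcont with ⟨x₀, hgx₀, hfx₀, hf⟩ | ⟨x₀, hfx₀, hgx₀, hg⟩
    · exact iInf_add_le_iSup_neg_fconj_sub_fconj_neg hfc hgc hfx₀ hgx₀ hf
    · rw [iSup_neg_fconj_sub_fconj_neg_comm]
      simpa only [add_comm] using iInf_add_le_iSup_neg_fconj_sub_fconj_neg hgc hfc hgx₀ hfx₀ hg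
  have hDB : (⨆ p : StrongDual ℝ X, -fconj f p - fconj g (-p)) ≤
      ⨅ z : StrongDual ℝ (StrongDual ℝ X), fbiconj f z + fbiconj g z :=
    le_iInf fun z => iSup_le fun p => neg_fconj_sub_fconj_neg_le_fbiconj_add f g z p
  have hBP : (⨅ z : StrongDual ℝ (StrongDual ℝ X), fbiconj f z + fbiconj g z) ≤
      ⨅ x : X, f x + g x :=
    le_iInf fun x => (iInf_le _ (inclusionInDoubleDual ℝ X x)).trans
      (add_le_add (fbiconj_inclusionInDoubleDual_le f x) (fbiconj_inclusionInDoubleDual_le g x))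
  exact ⟨le_antisymm hBP (hPD.trans hDB), le_antisymm (hDB.trans hBP) hPD⟩

/-- (Fenchel duality via biconjugates.) Let `f, g` be proper convex
and suppose one of them is finite and continuous at some point of the effective domain of
the other. Then `inf_{z ∈ X**} (f**(z) + g**(z)) = inf_{x ∈ X} (f(x) + g(x))`, and
consequently there is a zero duality gap with the Fenchel dual:
`sup_{x*} ( −f*(x*) − g*(−x*) ) = inf_x (f(x) + g(x))`. -/
theorem fenchel_duality_biconjugate
    {X : Type*} [NormedAddCommGroup X] [NormedSpace ℝ X] [CompleteSpace X]
    (f g : X → EReal)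
    (hfp : ProperER f) (hfc : ConvexER f) (hgp : ProperER g) (hgc : ConvexER g)
    (hcont : (∃ x, g x ≠ ⊤ ∧ f x ≠ ⊤ ∧ ContinuousAt f x) ∨
             (∃ x, f x ≠ ⊤ ∧ g x ≠ ⊤ ∧ ContinuousAt g x)) :
    (⨅ z : StrongDual ℝ (StrongDual ℝ X), fbiconj f z + fbiconj g z) = (⨅ x : X, f x + g x) ∧
      (⨆ p : StrongDual ℝ X, -fconj f p - fconj g (-p)) = ⨅ x : X, f x + g x :=
  fenchel_duality_biconjugate_general f g hfc hgc hcont
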